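/- The family C4, the restriction of C5 to the four base elements {0,1,3,4} (deleting element 2), satisfies ucs(C4) = 2. -/

import Mathlib

/-- The family `C5`: a function `f : ZMod 5 → Bool` belongs to `C5` iff it takes the
values 1-0-0-1 on some four consecutive vertices of the pentagon. -/
def C5 : Set (ZMod 5 → Bool) :=
  {f | ∃ i : ZMod 5, f i = true ∧ f (i + 1) = false ∧ f (i + 2) = false ∧ f (i + 3) = true}

/-- A family `F` shatters a finite set `X` if every `{0,1}`-function on `X`
has an extension in `F`. -/
def Shatters {B : Type*} (F : Set (B → Bool)) (X : Finset B) : Prop :=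
  ∀ g : B → Bool, ∃ f ∈ F, ∀ x ∈ X, f x = g x

/-- The VC-dimension of a family: the size of the largest shattered set. -/
noncomputable def vcDim {B : Type*} (F : Set (B → Bool)) : ℕ :=
  sSup {n | ∃ X : Finset B, Shatters F X ∧ X.card = n}

/-- `g : B → Option Bool` (a partial function, with domain the set of points
where `g` is `some _`) is a partial function (trace) of the family `F` if some `f ∈ F`
extends it. -/
def IsPartialOf {B : Type*} (F : Set (B → Bool)) (g : B → Option Bool) : Prop :=
  ∃ f ∈ F, ∀ x b, g x = some b → f x = b

/-- `F` admits an unlabeled compression scheme of size `k`: a pair `(α, β)` where `α`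
maps every partial function `g` of `F` (with domain `S`) to a subset `α g ⊆ S` with
`|α g| ≤ k`, `β` maps every subset of the base set to a total function, and
`β (α g)` extends `g`. -/
def HasUCS {B : Type*} (F : Set (B → Bool)) (k : ℕ) : Prop :=
  ∃ (α : (B → Option Bool) → Finset B) (β : Finset B → (B → Bool)),
    ∀ g : B → Option Bool, IsPartialOf F g →
      (∀ x ∈ α g, (g x).isSome) ∧ (α g).card ≤ k ∧
      (∀ x b, g x = some b → β (α g) x = b)

/-- The minimum size of an unlabeled compression scheme for `F`. -/
noncomputable def ucs {B : Type*} (F : Set (B → Bool)) : ℕ := sInf {k | HasUCS F k}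

/-- `C4`: the restriction of `C5` to the four base elements `{0, 1, 3, 4}`. -/
def C4 : Set ((({0, 1, 3, 4} : Set (ZMod 5))) → Bool) :=
  {g | ∃ f ∈ C5, ∀ x : ({0, 1, 3, 4} : Set (ZMod 5)), g x = f x.val}

/- ---------- auxiliary definitions and lemmas ---------- -/

abbrev Bt := ({0, 1, 3, 4} : Set (ZMod 5))

instance instDecC5 : ∀ f, Decidable (f ∈ C5) := fun f =>
  decidable_of_iff (∃ i : ZMod 5,
    f i = true ∧ f (i + 1) = false ∧ f (i + 2) = false ∧ f (i + 3) = true) Iff.rfl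

instance instDecC4 : ∀ g, Decidable (g ∈ C4) := fun g =>
  decidable_of_iff (∃ f, f ∈ C5 ∧ ∀ x : Bt, g x = f x.val) Iff.rfl

instance instDecPart : ∀ g, Decidable (IsPartialOf C4 g) := fun g =>
  decidable_of_iff (∃ f, f ∈ C4 ∧ ∀ x b, g x = some b → f x = b) Iff.rfl

def e0 : Bt := ⟨0, Or.inl rfl⟩
def e1 : Bt := ⟨1, Or.inr (Or.inl rfl)⟩
def e3 : Bt := ⟨3, Or.inr (Or.inr (Or.inl rfl))⟩
def e4 : Bt := ⟨4, Or.inr (Or.inr (Or.inr rfl))⟩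

def idx (x : Bt) : ℕ :=
  if x.val = 0 then 0 else if x.val = 1 then 1 else if x.val = 3 then 2 else 3

def enc (T : Finset Bt) : ℕ := T.sum (fun x => 2 ^ (idx x))

def tbl (n : ℕ) : ℕ :=
  [8, 9, 10, 11, 12, 13, 6, 0, 1, 6, 3, 0, 5, 0, 0, 0].getD n 0

/-- The reconstruction map of the compression scheme. -/
def myβ (T : Finset Bt) (x : Bt) : Bool := (tbl (enc T)).testBit (idx x)

/-- All subsets of the base set of size at most 2. -/
def cands : List (Finset Bt) :=
  [∅, {e0}, {e1}, {e3}, {e4}, {e0, e1}, {e0, e3}, {e0, e4}, {e1, e3}, {e1, e4}, {e3, e4}]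

/-- The compression map: pick the first candidate subset of the domain whose
reconstruction extends `g`. -/
def myα (g : Bt → Option Bool) : Finset Bt :=
  ((cands.find? (fun T =>
     decide ((∀ x ∈ T, (g x).isSome) ∧
       (∀ x b, g x = some b → myβ T x = b)))).getD ∅)

theorem hasUCS_two : HasUCS C4 2 := by
  refine ⟨myα, myβ, ?_⟩
  decide

theorem not_hasUCS_one : ¬ HasUCS C4 1 := by
  rintro ⟨α, β, h⟩
  set G : Fin 6 → (Bt → Bool) := fun i x => ([8,12,10,6,1,5].getD i 0).testBit (idx x) with hG
  have hpart : ∀ i : Fin 6, IsPartialOf C4 (fun x => some (G i x)) := by decide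
  set A : Fin 6 → Finset Bt := fun i => α (fun x => some (G i x)) with hA
  have hrec : ∀ i x, β (A i) x = G i x := fun i x => (h _ (hpart i)).2.2 x _ rfl
  have hcard : ∀ i, (A i).card ≤ 1 := fun i => (h _ (hpart i)).2.1
  have hGinj : ∀ i j : Fin 6, (∀ x, G i x = G j x) → i = j := by decide
  have hinj : Function.Injective A := by
    intro i j hij
    exact hGinj i j (fun x => by rw [← hrec i x, ← hrec j x, hij])
  have hle : (Finset.univ : Finset (Fin 6)).card ≤
      ((Finset.univ : Finset (Finset Bt)).filter (fun S => S.card ≤ 1)).card := by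
    apply Finset.card_le_card_of_injOn A
    · intro i _
      simp only [Finset.mem_coe, Finset.mem_filter, Finset.mem_univ, true_and]
      exact hcard i
    · exact fun i _ j _ hij => hinj hij
  have h5 : ((Finset.univ : Finset (Finset Bt)).filter (fun S => S.card ≤ 1)).card = 5 := by
    decide
  simp [h5] at hle

theorem hasUCS_mono {B : Type*} (F : Set (B → Bool)) {k m : ℕ} (hkm : k ≤ m)
    (h : HasUCS F k) : HasUCS F m := by
  obtain ⟨α, β, h⟩ := h
  exact ⟨α, β, fun g hg => ⟨(h g hg).1, le_trans (h g hg).2.1 hkm, (h g hg).2.2⟩⟩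

/-- `ucs C4 = 2`. -/
theorem ucs_C4_eq_two : ucs C4 = 2 := by
  have h2 : 2 ∈ {k | HasUCS C4 k} := hasUCS_two
  apply le_antisymm
  · exact Nat.sInf_le h2
  · apply le_csInf ⟨2, h2⟩
    intro k hk
    by_contra hlt
    push_neg at hlt
    interval_cases k
    · exact not_hasUCS_one (hasUCS_mono C4 (by norm_num) hk)
    · exact not_hasUCS_one hk
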